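/- Under the hypotheses of the linear-convergence theorem (Newton tracking primal–dual iteration with ε − α·λ_max(I − 𝐖) > 4L_f²/μ_f, v⁰ = 0, v* in the column space of (I − 𝐖)^{1/2}, and contraction factor 1/(1+δ') with δ' > 0 as defined there), the primal iterates converge linearly to x*: for every t ≥ 0, ‖x^t − x*‖² ≤ (1/(ε − α·λ_max(I − 𝐖))) · (1/(1+δ'))^t · ‖ζ⁰ − ζ*‖²_G. -/

import Mathlib

open Matrix Kronecker
open scoped InnerProductSpace

noncomputable section

/-- Local decision space `ℝ^p`. -/
abbrev Ep (p : ℕ) : Type := EuclideanSpace ℝ (Fin p)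

/-- Stacked space `ℝ^{np}`. -/
abbrev Vnp (n p : ℕ) : Type := EuclideanSpace ℝ (Fin n × Fin p)

/-- The `i`-th block `x_i ∈ ℝ^p` of a stacked vector `x ∈ ℝ^{np}`. -/
def blk {n p : ℕ} (x : Vnp n p) (i : Fin n) : Ep p := WithLp.toLp 2 (fun j => x (i, j))

/-- Aggregate objective `f(x) = ∑ i, f_i(x_i)`. -/
def aggF {n p : ℕ} (f : Fin n → Ep p → ℝ) (x : Vnp n p) : ℝ := ∑ i, f i (blk x i)

/-- Stacked gradient `∇f(x) = [∇f_1(x_1); …; ∇f_n(x_n)]`. -/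
def aggGrad {n p : ℕ} (g : Fin n → Ep p → Ep p) (x : Vnp n p) : Vnp n p :=
  WithLp.toLp 2 (fun ij : Fin n × Fin p => g ij.1 (blk x ij.1) ij.2)

/-- Block-diagonal Hessian `∇²f(x)` applied to `w`. -/
def aggHess {n p : ℕ} (h : Fin n → Ep p → (Ep p →L[ℝ] Ep p)) (x w : Vnp n p) : Vnp n p :=
  WithLp.toLp 2 (fun ij : Fin n × Fin p => h ij.1 (blk x ij.1) (blk w ij.1) ij.2)

/-- `𝐖 = W ⊗ I_p`. -/
def bigW {n : ℕ} (p : ℕ) (W : Matrix (Fin n) (Fin n) ℝ) :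
    Matrix (Fin n × Fin p) (Fin n × Fin p) ℝ :=
  W ⊗ₖ (1 : Matrix (Fin p) (Fin p) ℝ)

/-- `I − 𝐖`. -/
def IWmat {n : ℕ} (p : ℕ) (W : Matrix (Fin n) (Fin n) ℝ) :
    Matrix (Fin n × Fin p) (Fin n × Fin p) ℝ :=
  1 - bigW p W

/-- The square root of a positive semidefinite matrix (as in the older Mathlib). -/
def Matrix.PosSemidef.sqrt {n : Type*} [Fintype n] [DecidableEq n]
    {A : Matrix n n ℝ} (hA : A.PosSemidef) : Matrix n n ℝ :=
  (hA.1.eigenvectorUnitary : Matrix n n ℝ) *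
    diagonal ((↑) ∘ (fun x : ℝ => √x) ∘ hA.1.eigenvalues) *
    (star hA.1.eigenvectorUnitary : Matrix n n ℝ)

/-- Largest eigenvalue of a (square, real) matrix. -/
def lamMax {m : Type*} [Fintype m] [DecidableEq m] (A : Matrix m m ℝ) : ℝ :=
  sSup {r : ℝ | Module.End.HasEigenvalue (Matrix.toLin' A) r}

/-- Smallest nonzero eigenvalue of a (square, real) matrix. -/
def lamMinNZ {m : Type*} [Fintype m] [DecidableEq m] (A : Matrix m m ℝ) : ℝ :=
  sInf {r : ℝ | r ≠ 0 ∧ Module.End.HasEigenvalue (Matrix.toLin' A) r}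

/-- `δ = 1 − 4L_f²/(μ_f(ε − α·λ_max(I−𝐖)))`. -/
def deltaNT (μf Lf α ε lmax : ℝ) : ℝ := 1 - 4 * Lf ^ 2 / (μf * (ε - α * lmax))

/-- The contraction constant `δ'` from the linear convergence theorem. -/
def deltaNT' (μf Lf α ε lmax lminhat β φ : ℝ) : ℝ :=
  min (μf * deltaNT μf Lf α ε lmax /
        ((1 + deltaNT μf Lf α ε lmax) * (ε + β * φ * Lf ^ 2 / (α * lminhat))))
      (α * (deltaNT μf Lf α ε lmax) ^ 2 * (ε - α * lmax) * lminhat /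
        (β * ε ^ 2 / (β - 1) + β * φ * (2 * Lf + α * lmax) ^ 2 / (φ - 1)))

/-!
Write `S = (I − 𝐖)^{1/2}`, `Q = εI − αS²`, and measure the primal–dual error in the `G`-norm
`⟪x, Q x⟫ + ‖v‖² / α`. Subtracting the optimality conditions from the iteration gives the error
identity `QΔ + e = (∇f(x^{t+1}) − ∇f(x*)) + S (v^{t+1} − v*)`, where `Δ = x^t − x^{t+1}` and `e`
is the Newton linearisation error, `‖e‖ ≤ 2 L_f ‖Δ‖`. Pairing it with `x^{t+1} − x*` and using
strong monotonicity of `∇f`, the `G`-norm drops in one step by at least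
`2 μ_f X² − 4 L_f X D + (ε − α λ_max) D²`, with `X = ‖x^{t+1} − x*‖` and `D = ‖Δ‖`. Solving the
identity for `S (v^{t+1} − v*)` instead, and using `‖S w‖² ≥ λ̂_min ‖w‖²` on the range of `S`
(which contains every dual error), bounds the new `G`-norm by a combination of `X²` and `D²`;
`δ'` is chosen so that `δ'` times this bound is at most the drop. Hence the `G`-norm contracts by
`1 / (1 + δ')` per step, and `Q ⪰ (ε − α λ_max) I` converts this into the bound on `‖x^t − x*‖²`.
-/

open scoped RealInnerProductSpace

theorem norm_add_sq_le_of_one_lt {E : Type*} [SeminormedAddCommGroup E] (a w : E) {β : ℝ}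
    (hβ : 1 < β) : ‖a + w‖ ^ 2 ≤ β / (β - 1) * ‖a‖ ^ 2 + β * ‖w‖ ^ 2 := by
  have hβ1 : 0 < β - 1 := sub_pos.2 hβ
  have hsq : 0 ≤ (‖a‖ - (β - 1) * ‖w‖) ^ 2 / (β - 1) := by positivity
  have hexp : β / (β - 1) * ‖a‖ ^ 2 + β * ‖w‖ ^ 2 - (‖a‖ + ‖w‖) ^ 2
      = (‖a‖ - (β - 1) * ‖w‖) ^ 2 / (β - 1) := by
    field_simp; ring
  nlinarith [norm_add_le a w, norm_nonneg (a + w), norm_nonneg a, norm_nonneg w]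

theorem norm_add_add_sq_le_of_one_lt {E : Type*} [SeminormedAddCommGroup E] (a b c : E)
    {β φ : ℝ} (hβ : 1 < β) (hφ : 1 < φ) :
    ‖a + (b + c)‖ ^ 2 ≤ β / (β - 1) * ‖a‖ ^ 2 + β * φ / (φ - 1) * ‖b‖ ^ 2 + β * φ * ‖c‖ ^ 2 := by
  have hβ0 : 0 < β := by linarith
  calc ‖a + (b + c)‖ ^ 2 ≤ β / (β - 1) * ‖a‖ ^ 2 + β * (φ / (φ - 1) * ‖b‖ ^ 2 + φ * ‖c‖ ^ 2) :=
        (norm_add_sq_le_of_one_lt a (b + c) hβ).trans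
          (by gcongr; exact norm_add_sq_le_of_one_lt b c hφ)
    _ = _ := by ring

theorem LinearMap.IsSymmetric.inner_apply_apply_self {E : Type*} [NormedAddCommGroup E]
    [InnerProductSpace ℝ E] {S : E →ₗ[ℝ] E} (hS : S.IsSymmetric) (y : E) :
    ⟪y, S (S y)⟫ = ‖S y‖ ^ 2 := by
  rw [← hS, real_inner_self_eq_norm_sq]

namespace Matrix

variable {m : Type*} [Fintype m] [DecidableEq m] {A : Matrix m m ℝ}

theorem PosSemidef.sqrt_mul_self (hA : A.PosSemidef) : hA.sqrt * hA.sqrt = A := by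
  set U : Matrix m m ℝ := (hA.1.eigenvectorUnitary : Matrix m m ℝ)
  set D : Matrix m m ℝ := diagonal ((↑) ∘ (fun x : ℝ => √x) ∘ hA.1.eigenvalues)
  have hU : star U * U = 1 := Unitary.star_mul_self_of_mem hA.1.eigenvectorUnitary.2
  have hD : D * D = diagonal (RCLike.ofReal ∘ hA.1.eigenvalues) := by
    simp [D, diagonal_mul_diagonal, Real.mul_self_sqrt (hA.eigenvalues_nonneg _)]
  conv_rhs => rw [hA.1.spectral_theorem, Unitary.conjStarAlgAut_apply]
  calc U * D * star U * (U * D * star U) = U * (D * (star U * U) * D) * star U := by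
        simp only [Matrix.mul_assoc]
    _ = _ := by rw [hU, Matrix.mul_one, hD]

theorem PosSemidef.isHermitian_sqrt (hA : A.PosSemidef) : hA.sqrt.IsHermitian := by
  simpa [Matrix.PosSemidef.sqrt, Matrix.star_eq_conjTranspose] using
    isHermitian_mul_mul_conjTranspose (hA.1.eigenvectorUnitary : Matrix m m ℝ)
      (isHermitian_diagonal ((↑) ∘ (fun x : ℝ => √x) ∘ hA.1.eigenvalues))

theorem PosSemidef.toEuclideanLin_sqrt_sqrt (hA : A.PosSemidef) (y : EuclideanSpace ℝ m) :
    toEuclideanLin hA.sqrt (toEuclideanLin hA.sqrt y) = toEuclideanLin A y := by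
  conv_rhs => rw [← hA.sqrt_mul_self]
  rw [toLpLin_mul_same, LinearMap.comp_apply]

theorem IsHermitian.setOf_hasEigenvalue_toLin' (hA : A.IsHermitian) :
    {r : ℝ | Module.End.HasEigenvalue (toLin' A) r} = Set.range hA.eigenvalues := by
  ext r
  rw [Set.mem_ofPred_eq, Module.End.hasEigenvalue_iff_mem_spectrum, spectrum_toLin',
    hA.spectrum_real_eq_range_eigenvalues]

theorem PosSemidef.lamMax_nonneg (hA : A.PosSemidef) : 0 ≤ lamMax A := by
  refine Real.sSup_nonneg fun r hr => ?_
  obtain ⟨i, rfl⟩ := hA.1.setOf_hasEigenvalue_toLin' ▸ hr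
  exact hA.eigenvalues_nonneg i

theorem IsHermitian.toEuclideanLin_eigenvectorBasis (hA : A.IsHermitian) (i : m) :
    toEuclideanLin A (hA.eigenvectorBasis i) = hA.eigenvalues i • hA.eigenvectorBasis i := by
  ext j
  simpa [toLpLin_apply] using congrFun (hA.mulVec_eigenvectorBasis i) j

theorem IsHermitian.inner_eigenvectorBasis_toEuclideanLin (hA : A.IsHermitian) (i : m)
    (y : EuclideanSpace ℝ m) :
    ⟪hA.eigenvectorBasis i, toEuclideanLin A y⟫
      = hA.eigenvalues i * ⟪hA.eigenvectorBasis i, y⟫ := by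
  rw [← isSymmetric_toEuclideanLin_iff.mpr hA, hA.toEuclideanLin_eigenvectorBasis,
    real_inner_smul_left]

theorem IsHermitian.inner_toEuclideanLin_self (hA : A.IsHermitian) (y : EuclideanSpace ℝ m) :
    ⟪y, toEuclideanLin A y⟫ = ∑ i, hA.eigenvalues i * ⟪hA.eigenvectorBasis i, y⟫ ^ 2 := by
  rw [← hA.eigenvectorBasis.sum_inner_mul_inner]
  refine Finset.sum_congr rfl fun i _ => ?_
  rw [hA.inner_eigenvectorBasis_toEuclideanLin, real_inner_comm y]
  ring

theorem IsHermitian.norm_sq_eq_sum (hA : A.IsHermitian) (y : EuclideanSpace ℝ m) :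
    ‖y‖ ^ 2 = ∑ i, ⟪hA.eigenvectorBasis i, y⟫ ^ 2 := by
  rw [← real_inner_self_eq_norm_sq, ← hA.eigenvectorBasis.sum_inner_mul_inner]
  refine Finset.sum_congr rfl fun i _ => ?_
  rw [real_inner_comm y, sq]

theorem IsHermitian.inner_toEuclideanLin_self_le_lamMax (hA : A.IsHermitian)
    (y : EuclideanSpace ℝ m) :
    ⟪y, toEuclideanLin A y⟫ ≤ lamMax A * ‖y‖ ^ 2 := by
  rw [hA.inner_toEuclideanLin_self, hA.norm_sq_eq_sum, Finset.mul_sum]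
  refine Finset.sum_le_sum fun i _ => mul_le_mul_of_nonneg_right ?_ (sq_nonneg _)
  rw [lamMax, hA.setOf_hasEigenvalue_toLin']
  exact le_csSup (Set.finite_range _).bddAbove ⟨i, rfl⟩

theorem IsHermitian.lamMinNZ_mul_norm_sq_le (hA : A.IsHermitian) {y : EuclideanSpace ℝ m}
    (hy : ∀ k, toEuclideanLin A k = 0 → ⟪k, y⟫ = 0) :
    lamMinNZ A * ‖y‖ ^ 2 ≤ ⟪y, toEuclideanLin A y⟫ := by
  rw [hA.inner_toEuclideanLin_self, hA.norm_sq_eq_sum, Finset.mul_sum]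
  refine Finset.sum_le_sum fun i _ => ?_
  by_cases h0 : hA.eigenvalues i = 0
  · rw [hy _ (by rw [hA.toEuclideanLin_eigenvectorBasis, h0, zero_smul]), h0]
    simp
  · refine mul_le_mul_of_nonneg_right (csInf_le ?_ ⟨h0, ?_⟩) (sq_nonneg _)
    · exact (Set.finite_range hA.eigenvalues).bddBelow.mono fun r hr =>
        hA.setOf_hasEigenvalue_toLin' ▸ hr.2
    · exact (Set.ext_iff.1 hA.setOf_hasEigenvalue_toLin' _).2 ⟨i, rfl⟩

theorem PosSemidef.norm_toEuclideanLin_sqrt_sq_le (hA : A.PosSemidef) (y : EuclideanSpace ℝ m) :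
    ‖toEuclideanLin hA.sqrt y‖ ^ 2 ≤ lamMax A * ‖y‖ ^ 2 := by
  rw [← (isSymmetric_toEuclideanLin_iff.mpr hA.isHermitian_sqrt).inner_apply_apply_self,
    hA.toEuclideanLin_sqrt_sqrt]
  exact hA.1.inner_toEuclideanLin_self_le_lamMax y

theorem PosSemidef.lamMinNZ_mul_norm_toEuclideanLin_sqrt_sq_le (hA : A.PosSemidef)
    (y : EuclideanSpace ℝ m) :
    lamMinNZ A * ‖toEuclideanLin hA.sqrt y‖ ^ 2
      ≤ ‖toEuclideanLin hA.sqrt (toEuclideanLin hA.sqrt y)‖ ^ 2 := by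
  set T := toEuclideanLin hA.sqrt
  have hT : T.IsSymmetric := isSymmetric_toEuclideanLin_iff.mpr hA.isHermitian_sqrt
  have hker : ∀ k, toEuclideanLin A k = 0 → ⟪k, T y⟫ = 0 := fun k hk => by
    have hTk : ‖T k‖ ^ 2 = 0 := by
      rw [← hT.inner_apply_apply_self, hA.toEuclideanLin_sqrt_sqrt, hk, inner_zero_right]
    rw [← hT, norm_eq_zero.1 (pow_eq_zero_iff two_ne_zero |>.1 hTk), inner_zero_left]
  have := hA.1.lamMinNZ_mul_norm_sq_le hker
  rw [← hA.toEuclideanLin_sqrt_sqrt] at this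
  change _ ≤ ⟪T y, T (T (T y))⟫ at this
  rwa [← hT, real_inner_self_eq_norm_sq] at this

end Matrix

section Smooth

variable {F : Type*} [NormedAddCommGroup F] [InnerProductSpace ℝ F]

theorem ContinuousLinearMap.opNorm_le_of_isSymmetric {T : F →L[ℝ] F}
    (hT : (T : F →ₗ[ℝ] F).IsSymmetric) {c : ℝ} (hc : 0 ≤ c)
    (hTc : ∀ w, |⟪T w, w⟫| ≤ c * ‖w‖ ^ 2) : ‖T‖ ≤ c := by
  rw [T.norm_eq_iSup_rayleighQuotient hT]
  refine ciSup_le fun w => ?_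
  rw [abs_div, abs_of_nonneg (sq_nonneg ‖w‖)]
  exact div_le_of_le_mul₀ (sq_nonneg _) hc (hTc w)

theorem inner_sub_sub_ge_of_hasFDerivAt {g : F → F} {h : F → F →L[ℝ] F}
    (hh : ∀ z, HasFDerivAt g (h z) z) {μ : ℝ} (hμ : ∀ z w, μ * ‖w‖ ^ 2 ≤ ⟪h z w, w⟫)
    (a b : F) : μ * ‖a - b‖ ^ 2 ≤ ⟪g a - g b, a - b⟫ := by
  set d := a - b
  have hline : ∀ s : ℝ, HasDerivAt (fun s : ℝ => b + s • d) d s := fun s => by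
    simpa using ((hasDerivAt_id s).smul_const d).const_add b
  have hφ : ∀ s : ℝ, HasDerivAt (fun s : ℝ => ⟪d, g (b + s • d)⟫ - s * (μ * ‖d‖ ^ 2))
      (⟪d, h (b + s • d) d⟫ - μ * ‖d‖ ^ 2) s := fun s =>
    ((innerSL ℝ d).hasFDerivAt.comp_hasDerivAt s ((hh _).comp_hasDerivAt s (hline s))).sub
      ((hasDerivAt_mul_const (μ * ‖d‖ ^ 2)))
  have h01 := monotone_of_hasDerivAt_nonneg hφ (fun s => sub_nonneg.2 <| by
    rw [real_inner_comm]; exact hμ _ d) zero_le_one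
  simp only [zero_smul, add_zero, one_smul, zero_mul, sub_zero, one_mul,
    show b + d = a from add_sub_cancel b a] at h01
  rw [inner_sub_left, real_inner_comm d (g a), real_inner_comm d (g b)]
  linarith

variable [CompleteSpace F] {f : F → ℝ} {g : F → F} {h : F → F →L[ℝ] F}

theorem isSymmetric_of_hasFDerivAt_gradient (hg : ∀ z, HasGradientAt f (g z) z)
    (hh : ∀ z, HasFDerivAt g (h z) z) (z : F) : (h z : F →ₗ[ℝ] F).IsSymmetric := by
  set D := (InnerProductSpace.toDual ℝ F).toContinuousLinearEquiv.toContinuousLinearMap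
  have hf' : ∀ y, HasFDerivAt f (D (g y)) y := fun y => (hg y).hasFDerivAt
  intro u w
  have := second_derivative_symmetric hf' (D.hasFDerivAt.comp z (hh z)) u w
  simpa [D, InnerProductSpace.toDual_apply_apply, real_inner_comm] using this

theorem norm_le_of_hasFDerivAt_gradient (hg : ∀ z, HasGradientAt f (g z) z)
    (hh : ∀ z, HasFDerivAt g (h z) z) {L : ℝ} (hL : 0 ≤ L) (hpos : ∀ z w, 0 ≤ ⟪h z w, w⟫)
    (hup : ∀ z w, ⟪h z w, w⟫ ≤ L * ‖w‖ ^ 2) (z : F) : ‖h z‖ ≤ L :=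
  (h z).opNorm_le_of_isSymmetric (isSymmetric_of_hasFDerivAt_gradient hg hh z) hL fun w => by
    rw [abs_of_nonneg (hpos z w)]
    exact hup z w

end Smooth

section Blocks

variable {n p : ℕ}

@[simp] theorem blk_sub (x y : Vnp n p) (i : Fin n) : blk (x - y) i = blk x i - blk y i := rfl

@[simp] theorem blk_aggGrad (g : Fin n → Ep p → Ep p) (x : Vnp n p) (i : Fin n) :
    blk (aggGrad g x) i = g i (blk x i) := rfl

@[simp] theorem blk_aggHess (h : Fin n → Ep p → (Ep p →L[ℝ] Ep p)) (x w : Vnp n p) (i : Fin n) :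
    blk (aggHess h x w) i = h i (blk x i) (blk w i) := rfl

theorem inner_eq_sum_inner_blk (u w : Vnp n p) : ⟪u, w⟫ = ∑ i, ⟪blk u i, blk w i⟫ := by
  simp only [PiLp.inner_apply, RCLike.inner_apply, starRingEnd_apply, star_trivial]
  exact Fintype.sum_prod_type _

theorem norm_sq_eq_sum_norm_sq_blk (u : Vnp n p) : ‖u‖ ^ 2 = ∑ i, ‖blk u i‖ ^ 2 := by
  simp only [← real_inner_self_eq_norm_sq, inner_eq_sum_inner_blk]

theorem norm_le_of_forall_norm_blk_le {u w : Vnp n p} {L : ℝ} (hL : 0 ≤ L)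
    (huw : ∀ i, ‖blk u i‖ ≤ L * ‖blk w i‖) : ‖u‖ ≤ L * ‖w‖ := by
  refine le_of_sq_le_sq ?_ (by positivity)
  rw [mul_pow, norm_sq_eq_sum_norm_sq_blk, norm_sq_eq_sum_norm_sq_blk, Finset.mul_sum]
  exact Finset.sum_le_sum fun i _ => by
    rw [← mul_pow]; exact pow_le_pow_left₀ (norm_nonneg _) (huw i) 2

variable {g : Fin n → Ep p → Ep p} {h : Fin n → Ep p → (Ep p →L[ℝ] Ep p)} {L : ℝ}

theorem aggGrad_inner_sub_sub_ge (hh : ∀ i z, HasFDerivAt (g i) (h i z) z) {μ : ℝ}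
    (hμ : ∀ i z w, μ * ‖w‖ ^ 2 ≤ ⟪h i z w, w⟫) (a b : Vnp n p) :
    μ * ‖a - b‖ ^ 2 ≤ ⟪aggGrad g a - aggGrad g b, a - b⟫ := by
  rw [inner_eq_sum_inner_blk, norm_sq_eq_sum_norm_sq_blk, Finset.mul_sum]
  exact Finset.sum_le_sum fun i _ => by
    simpa using inner_sub_sub_ge_of_hasFDerivAt (hh i) (hμ i) (blk a i) (blk b i)

theorem norm_aggGrad_sub_le (hh : ∀ i z, HasFDerivAt (g i) (h i z) z) (hL : 0 ≤ L)
    (hhL : ∀ i z, ‖h i z‖ ≤ L) (a b : Vnp n p) :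
    ‖aggGrad g a - aggGrad g b‖ ≤ L * ‖a - b‖ :=
  norm_le_of_forall_norm_blk_le hL fun i => by
    simpa using convex_univ.norm_image_sub_le_of_norm_hasFDerivWithin_le
      (fun z _ => (hh i z).hasFDerivWithinAt) (fun z _ => hhL i z) (Set.mem_univ (blk b i))
      (Set.mem_univ (blk a i))

theorem norm_aggHess_le (hL : 0 ≤ L) (hhL : ∀ i z, ‖h i z‖ ≤ L) (z w : Vnp n p) :
    ‖aggHess h z w‖ ≤ L * ‖w‖ :=
  norm_le_of_forall_norm_blk_le hL fun i => by
    simpa using (h i (blk z i)).le_of_opNorm_le (hhL i _) (blk w i)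

end Blocks

section Constants

variable {μ L α ε lmax lmin β φ : ℝ}

theorem deltaNT_pos_and_eq (hμ : 0 < μ) (hcond : 4 * L ^ 2 / μ < ε - α * lmax) :
    0 < deltaNT μ L α ε lmax ∧
      4 * L ^ 2 = μ * (ε - α * lmax) * (1 - deltaNT μ L α ε lmax) := by
  have hs : 0 < ε - α * lmax := (by positivity : 0 ≤ 4 * L ^ 2 / μ).trans_lt hcond
  refine ⟨?_, ?_⟩
  · rw [deltaNT, sub_pos, div_lt_one (by positivity), ← div_lt_iff₀' hμ]
    exact hcond
  · rw [deltaNT]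
    field_simp
    ring

theorem quadratic_le_of_deltaNT (hμ : 0 < μ) (hcond : 4 * L ^ 2 / μ < ε - α * lmax) (X D : ℝ) :
    μ * deltaNT μ L α ε lmax / (1 + deltaNT μ L α ε lmax) * X ^ 2
        + deltaNT μ L α ε lmax ^ 2 * (ε - α * lmax) * D ^ 2
      ≤ 2 * μ * X ^ 2 - 4 * L * X * D + (ε - α * lmax) * D ^ 2 := by
  obtain ⟨hδ, hδL⟩ := deltaNT_pos_and_eq hμ hcond
  set δ := deltaNT μ L α ε lmax
  set s := ε - α * lmax
  -- multiplied by `μ (1 + δ)`, the difference is a sum of squares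
  have hdiff : 2 * μ * X ^ 2 - 4 * L * X * D + s * D ^ 2
      - (μ * δ / (1 + δ) * X ^ 2 + δ ^ 2 * s * D ^ 2)
      = ((μ * X - 2 * L * (1 + δ) * D) ^ 2 + μ ^ 2 * (1 + δ) * X ^ 2) / (μ * (1 + δ)) := by
    field_simp
    linear_combination -((1 + δ) ^ 2 * D ^ 2) * hδL
  rw [← sub_nonneg, hdiff]
  positivity

theorem pos_of_deltaNT'_pos (hα : 0 < α) (hμ : 0 < μ) (hcond : 4 * L ^ 2 / μ < ε - α * lmax)
    (hβ : 1 < β) (hφ : 1 < φ) (hδ' : 0 < deltaNT' μ L α ε lmax lmin β φ) : 0 < lmin := by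
  have hs : 0 < ε - α * lmax := (by positivity : 0 ≤ 4 * L ^ 2 / μ).trans_lt hcond
  have hβ1 : 0 < β - 1 := sub_pos.2 hβ
  have hφ1 : 0 < φ - 1 := sub_pos.2 hφ
  have hβ0 : 0 < β := by linarith
  have hφ0 : 0 < φ := by linarith
  by_contra! hlmin
  have : α * deltaNT μ L α ε lmax ^ 2 * (ε - α * lmax) * lmin
      / (β * ε ^ 2 / (β - 1) + β * φ * (2 * L + α * lmax) ^ 2 / (φ - 1)) ≤ 0 :=
    div_nonpos_of_nonpos_of_nonneg (mul_nonpos_of_nonneg_of_nonpos (by positivity) hlmin)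
      (by positivity)
  exact (hδ'.trans_le (min_le_right _ _)).not_ge this

theorem deltaNT'_mul_le (hμ : 0 < μ) (hcond : 4 * L ^ 2 / μ < ε - α * lmax) (hα : 0 < α)
    (hε : 0 < ε) (hlmin : 0 < lmin) (hβ : 1 < β) (hφ : 1 < φ) (X D : ℝ) :
    deltaNT' μ L α ε lmax lmin β φ * ((ε + β * φ * L ^ 2 / (α * lmin)) * X ^ 2
      + (β * ε ^ 2 / (β - 1) + β * φ * (2 * L + α * lmax) ^ 2 / (φ - 1)) / (α * lmin) * D ^ 2)
      ≤ 2 * μ * X ^ 2 - 4 * L * X * D + (ε - α * lmax) * D ^ 2 := by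
  obtain ⟨hδ, -⟩ := deltaNT_pos_and_eq hμ hcond
  have hβ1 : 0 < β - 1 := sub_pos.2 hβ
  have hφ1 : 0 < φ - 1 := sub_pos.2 hφ
  have hβ0 : 0 < β := by linarith
  have hφ0 : 0 < φ := by linarith
  set δ := deltaNT μ L α ε lmax
  set δ' := deltaNT' μ L α ε lmax lmin β φ
  set c := ε + β * φ * L ^ 2 / (α * lmin)
  set K := β * ε ^ 2 / (β - 1) + β * φ * (2 * L + α * lmax) ^ 2 / (φ - 1)
  have hc : 0 < c := by positivity
  have hK : 0 < K := by positivity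
  have hmin : δ' = min (μ * δ / ((1 + δ) * c)) (α * δ ^ 2 * (ε - α * lmax) * lmin / K) := rfl
  have h1 : δ' * c ≤ μ * δ / (1 + δ) :=
    calc δ' * c ≤ μ * δ / ((1 + δ) * c) * c := by gcongr; exact hmin ▸ min_le_left _ _
      _ = μ * δ / (1 + δ) := by field_simp
  have h2 : δ' * (K / (α * lmin)) ≤ δ ^ 2 * (ε - α * lmax) :=
    calc δ' * (K / (α * lmin))
        ≤ α * δ ^ 2 * (ε - α * lmax) * lmin / K * (K / (α * lmin)) := by
          gcongr; exact hmin ▸ min_le_right _ _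
      _ = δ ^ 2 * (ε - α * lmax) := by field_simp
  calc δ' * (c * X ^ 2 + K / (α * lmin) * D ^ 2)
      = δ' * c * X ^ 2 + δ' * (K / (α * lmin)) * D ^ 2 := by ring
    _ ≤ μ * δ / (1 + δ) * X ^ 2 + δ ^ 2 * (ε - α * lmax) * D ^ 2 := by gcongr
    _ ≤ _ := quadratic_le_of_deltaNT hμ hcond X D

end Constants

theorem le_pow_mul_of_mul_succ_le {u : ℕ → ℝ} {d : ℝ} (hd : 0 < 1 + d)
    (hu : ∀ t, (1 + d) * u (t + 1) ≤ u t) (t : ℕ) : u t ≤ (1 / (1 + d)) ^ t * u 0 := by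
  induction t with
  | zero => simp
  | succ t ih =>
    calc u (t + 1) ≤ 1 / (1 + d) * u t := by
          rw [one_div_mul_eq_div, le_div_iff₀ hd, mul_comm]; exact hu t
      _ ≤ 1 / (1 + d) * ((1 / (1 + d)) ^ t * u 0) := by gcongr
      _ = (1 / (1 + d)) ^ (t + 1) * u 0 := by ring

section PrimalDual

variable {E : Type*} [NormedAddCommGroup E] [InnerProductSpace ℝ E] {S : E →ₗ[ℝ] E}
  {α ε μ L lmax lmin β φ : ℝ}

theorem inner_sub_smul_apply_apply_self_ge (hS : S.IsSymmetric) (hα : 0 ≤ α)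
    (hmax : ∀ y, ‖S y‖ ^ 2 ≤ lmax * ‖y‖ ^ 2) (y : E) :
    (ε - α * lmax) * ‖y‖ ^ 2 ≤ ⟪y, ε • y - α • S (S y)⟫ := by
  rw [inner_sub_right, real_inner_smul_right, real_inner_smul_right, real_inner_self_eq_norm_sq,
    hS.inner_apply_apply_self]
  nlinarith [mul_le_mul_of_nonneg_left (hmax y) hα]

theorem inner_sub_smul_apply_apply_self_le (hS : S.IsSymmetric) (hα : 0 ≤ α) (y : E) :
    ⟪y, ε • y - α • S (S y)⟫ ≤ ε * ‖y‖ ^ 2 := by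
  rw [inner_sub_right, real_inner_smul_right, real_inner_smul_right, real_inner_self_eq_norm_sq,
    hS.inner_apply_apply_self]
  nlinarith [mul_nonneg hα (sq_nonneg ‖S y‖)]

theorem norm_apply_apply_le (hlmax : 0 ≤ lmax) (hmax : ∀ y, ‖S y‖ ^ 2 ≤ lmax * ‖y‖ ^ 2)
    (y : E) : ‖S (S y)‖ ≤ lmax * ‖y‖ := by
  refine le_of_sq_le_sq ?_ (by positivity)
  calc ‖S (S y)‖ ^ 2 ≤ lmax * ‖S y‖ ^ 2 := hmax (S y)
    _ ≤ lmax * (lmax * ‖y‖ ^ 2) := mul_le_mul_of_nonneg_left (hmax y) hlmax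
    _ = (lmax * ‖y‖) ^ 2 := by ring

/-- `‖(x, v)‖²_G = xᵀ Q x + ‖v‖² / α` with `Q = εI − α S²`; for `S = (I − 𝐖)^{1/2}` and
`(x, v) = ζ − ζ*` this is the paper's `‖ζ − ζ*‖²_G`. -/
def gNormSq (S : E →ₗ[ℝ] E) (α ε : ℝ) (x v : E) : ℝ :=
  ⟪x, ε • x - α • S (S x)⟫ + 1 / α * ‖v‖ ^ 2

theorem gNormSq_add_sub_gNormSq (hS : S.IsSymmetric) (hα : α ≠ 0) {a Δ av bv e r : E}
    (hΔ : ε • Δ - α • S (S Δ) + e = r + S av) (ha : α • S a = av - bv) :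
    gNormSq S α ε (a + Δ) bv - gNormSq S α ε a av
      = 2 * ⟪a, r⟫ - 2 * ⟪a, e⟫ + ⟪Δ, ε • Δ - α • S (S Δ)⟫ + 1 / α * ‖bv - av‖ ^ 2 := by
  have hQ : ⟪a, ε • Δ - α • S (S Δ)⟫ = ⟪a, r⟫ - ⟪a, e⟫ + 1 / α * ⟪av - bv, av⟫ := by
    rw [eq_sub_of_add_eq hΔ, inner_sub_right, inner_add_right, ← hS, ← ha,
      real_inner_smul_left]
    field_simp
    ring
  have hsymm : ⟪Δ, S (S a)⟫ = ⟪a, S (S Δ)⟫ := by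
    rw [← real_inner_comm a (S (S Δ)), hS, hS]
  have hQexp : ⟪a + Δ, ε • (a + Δ) - α • S (S (a + Δ))⟫
      = ⟪a, ε • a - α • S (S a)⟫ + 2 * ⟪a, ε • Δ - α • S (S Δ)⟫
        + ⟪Δ, ε • Δ - α • S (S Δ)⟫ := by
    simp only [map_add, smul_add, inner_add_left, inner_add_right, inner_sub_right,
      real_inner_smul_right, hsymm, real_inner_comm Δ a]
    ring
  have hv : ‖bv‖ ^ 2 = ‖av‖ ^ 2 - 2 * ⟪av - bv, av⟫ + ‖bv - av‖ ^ 2 := by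
    rw [norm_sub_rev bv av, real_inner_comm av (av - bv), ← norm_sub_sq_real, sub_sub_cancel]
  rw [gNormSq, gNormSq, hQexp, hv, hQ]
  ring

theorem gNormSq_le (hS : S.IsSymmetric) (hα : 0 < α) (hlmax : 0 ≤ lmax)
    (hmax : ∀ y, ‖S y‖ ^ 2 ≤ lmax * ‖y‖ ^ 2) (hlmin : 0 < lmin) (hβ : 1 < β) (hφ : 1 < φ)
    {a Δ av e r : E} (hΔ : ε • Δ - α • S (S Δ) + e = r + S av)
    (hav : lmin * ‖av‖ ^ 2 ≤ ‖S av‖ ^ 2) (hr : ‖r‖ ≤ L * ‖a‖) (he : ‖e‖ ≤ 2 * L * ‖Δ‖) :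
    gNormSq S α ε a av ≤ (ε + β * φ * L ^ 2 / (α * lmin)) * ‖a‖ ^ 2
      + (β * ε ^ 2 / (β - 1) + β * φ * (2 * L + α * lmax) ^ 2 / (φ - 1)) / (α * lmin)
        * ‖Δ‖ ^ 2 := by
  have hβ1 : 0 < β - 1 := sub_pos.2 hβ
  have hφ1 : 0 < φ - 1 := sub_pos.2 hφ
  have hβ0 : 0 < β := by linarith
  have hSav : S av = ε • Δ + ((e - α • S (S Δ)) + -r) := by
    rw [eq_sub_of_add_eq' hΔ.symm]
    module
  have he' : ‖e - α • S (S Δ)‖ ≤ (2 * L + α * lmax) * ‖Δ‖ := by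
    refine (norm_sub_le _ _).trans ?_
    rw [norm_smul, Real.norm_eq_abs, abs_of_pos hα]
    nlinarith [norm_apply_apply_le hlmax hmax Δ]
  have hnorm : ‖S av‖ ^ 2 ≤ β * ε ^ 2 / (β - 1) * ‖Δ‖ ^ 2
      + β * φ / (φ - 1) * (2 * L + α * lmax) ^ 2 * ‖Δ‖ ^ 2 + β * φ * L ^ 2 * ‖a‖ ^ 2 := by
    rw [hSav]
    refine (norm_add_add_sq_le_of_one_lt _ _ _ hβ hφ).trans ?_
    rw [norm_smul, norm_neg, Real.norm_eq_abs, mul_pow, sq_abs]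
    have hφ0 : 0 < φ := by linarith
    calc _ ≤ β / (β - 1) * (ε ^ 2 * ‖Δ‖ ^ 2)
          + β * φ / (φ - 1) * ((2 * L + α * lmax) * ‖Δ‖) ^ 2 + β * φ * (L * ‖a‖) ^ 2 := by
          gcongr
      _ = _ := by ring
  have hav' : 1 / α * ‖av‖ ^ 2 ≤ ‖S av‖ ^ 2 / (α * lmin) := by
    rw [one_div_mul_eq_div, div_le_div_iff₀ hα (by positivity)]
    nlinarith
  calc gNormSq S α ε a av ≤ ε * ‖a‖ ^ 2 + ‖S av‖ ^ 2 / (α * lmin) :=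
        add_le_add (inner_sub_smul_apply_apply_self_le hS hα.le a) hav'
    _ ≤ ε * ‖a‖ ^ 2 + (β * ε ^ 2 / (β - 1) * ‖Δ‖ ^ 2
          + β * φ / (φ - 1) * (2 * L + α * lmax) ^ 2 * ‖Δ‖ ^ 2 + β * φ * L ^ 2 * ‖a‖ ^ 2)
          / (α * lmin) := by gcongr
    _ = _ := by ring

theorem newtonTracking_error_identity {G : E → E} {x x' v v' xs vs Hd : E}
    (hprimal : Hd + ε • (x - x') = G x + S v + α • S (S x)) (hdual : v' = v + α • S x')
    (hK : G xs + S vs = 0) :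
    ε • (x - x') - α • S (S (x - x')) + (Hd - (G x - G x')) = (G x' - G xs) + S (v' - vs) := by
  simp only [hdual, map_sub, map_add, map_smul]
  linear_combination (norm := module) hprimal + hK

theorem gNormSq_newtonTracking_step (hS : S.IsSymmetric) (hα : 0 < α) (hε : 0 < ε)
    (hμ : 0 < μ) (hlmax : 0 ≤ lmax)
    (hmax : ∀ y, ‖S y‖ ^ 2 ≤ lmax * ‖y‖ ^ 2) (hmin : ∀ y, lmin * ‖S y‖ ^ 2 ≤ ‖S (S y)‖ ^ 2)
    (hlmin : 0 < lmin) (hβ : 1 < β) (hφ : 1 < φ) (hcond : 4 * L ^ 2 / μ < ε - α * lmax)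
    (hδ' : 0 ≤ deltaNT' μ L α ε lmax lmin β φ) {G : E → E}
    (hGmono : ∀ a b, μ * ‖a - b‖ ^ 2 ≤ ⟪G a - G b, a - b⟫)
    (hGlip : ∀ a b, ‖G a - G b‖ ≤ L * ‖a - b‖) {x x' v v' xs vs Hd : E}
    (hHd : ‖Hd‖ ≤ L * ‖x - x'‖) (hprimal : Hd + ε • (x - x') = G x + S v + α • S (S x))
    (hdual : v' = v + α • S x') (hK1 : G xs + S vs = 0) (hK2 : S xs = 0)
    (hv' : v' - vs ∈ LinearMap.range S) :
    (1 + deltaNT' μ L α ε lmax lmin β φ) * gNormSq S α ε (x' - xs) (v' - vs)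
      ≤ gNormSq S α ε (x - xs) (v - vs) := by
  have hid := newtonTracking_error_identity hprimal hdual hK1
  have hSa : α • S (x' - xs) = (v' - vs) - (v - vs) := by
    rw [map_sub, hK2, sub_zero, hdual]; abel
  have henergy := gNormSq_add_sub_gNormSq hS hα.ne' hid hSa
  rw [show x' - xs + (x - x') = x - xs by abel] at henergy
  have he : ‖Hd - (G x - G x')‖ ≤ 2 * L * ‖x - x'‖ := by
    linarith [norm_sub_le Hd (G x - G x'), hGlip x x']
  have hav : lmin * ‖v' - vs‖ ^ 2 ≤ ‖S (v' - vs)‖ ^ 2 := by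
    obtain ⟨y, hy⟩ := hv'
    rw [← hy]
    exact hmin y
  have hup := gNormSq_le hS hα hlmax hmax hlmin hβ hφ hid hav (hGlip x' xs) he
  have hinner : ⟪x' - xs, Hd - (G x - G x')⟫ ≤ ‖x' - xs‖ * (2 * L * ‖x - x'‖) :=
    (real_inner_le_norm _ _).trans (mul_le_mul_of_nonneg_left he (norm_nonneg _))
  have hdescent := deltaNT'_mul_le hμ hcond hα hε hlmin hβ hφ ‖x' - xs‖ ‖x - x'‖
  have hmono := hGmono x' xs
  rw [real_inner_comm] at hmono
  linarith [inner_sub_smul_apply_apply_self_ge (ε := ε) hS hα.le hmax (x - x'),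
    mul_le_mul_of_nonneg_left hup hδ', (by positivity : 0 ≤ 1 / α * ‖v - vs - (v' - vs)‖ ^ 2)]

theorem norm_sub_sq_le_of_newtonTracking (hS : S.IsSymmetric) (hα : 0 < α) (hε : 0 < ε)
    (hμ : 0 < μ) (hlmax : 0 ≤ lmax) (hmax : ∀ y, ‖S y‖ ^ 2 ≤ lmax * ‖y‖ ^ 2)
    (hmin : ∀ y, lmin * ‖S y‖ ^ 2 ≤ ‖S (S y)‖ ^ 2) (hβ : 1 < β) (hφ : 1 < φ)
    (hcond : 4 * L ^ 2 / μ < ε - α * lmax) (hδ' : 0 < deltaNT' μ L α ε lmax lmin β φ)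
    {G : E → E} (hGmono : ∀ a b, μ * ‖a - b‖ ^ 2 ≤ ⟪G a - G b, a - b⟫)
    (hGlip : ∀ a b, ‖G a - G b‖ ≤ L * ‖a - b‖) {H : E → E → E}
    (hH : ∀ z w, ‖H z w‖ ≤ L * ‖w‖) {x v : ℕ → E}
    (hprimal : ∀ t, H (x t) (x t - x (t + 1)) + ε • (x t - x (t + 1))
      = G (x t) + S (v t) + α • S (S (x t)))
    (hdual : ∀ t, v (t + 1) = v t + α • S (x (t + 1))) {xs vs : E}
    (hK1 : G xs + S vs = 0) (hK2 : S xs = 0) (hv0 : v 0 - vs ∈ LinearMap.range S) (t : ℕ) :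
    ‖x t - xs‖ ^ 2 ≤ 1 / (ε - α * lmax) * (1 / (1 + deltaNT' μ L α ε lmax lmin β φ)) ^ t
      * gNormSq S α ε (x 0 - xs) (v 0 - vs) := by
  have hlmin := pos_of_deltaNT'_pos hα hμ hcond hβ hφ hδ'
  have hs : 0 < ε - α * lmax := (by positivity : 0 ≤ 4 * L ^ 2 / μ).trans_lt hcond
  have hrange : ∀ t, v t - vs ∈ LinearMap.range S := by
    intro t
    induction t with
    | zero => exact hv0
    | succ t ih =>
      rw [hdual, add_sub_right_comm]
      exact add_mem ih (Submodule.smul_mem _ _ (LinearMap.mem_range_self _ _))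
  have hV := le_pow_mul_of_mul_succ_le (by linarith)
    (u := fun t => gNormSq S α ε (x t - xs) (v t - vs)) (fun t =>
    gNormSq_newtonTracking_step hS hα hε hμ hlmax hmax hmin hlmin hβ hφ hcond hδ'.le hGmono
      hGlip (hH _ _) (hprimal t) (hdual t) hK1 hK2 (hrange (t + 1))) t
  have hx : (ε - α * lmax) * ‖x t - xs‖ ^ 2 ≤ gNormSq S α ε (x t - xs) (v t - vs) :=
    (inner_sub_smul_apply_apply_self_ge hS hα.le hmax _).trans
      (le_add_of_nonneg_right (by positivity))
  rw [mul_assoc, one_div_mul_eq_div, le_div_iff₀ hs]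
  linarith

end PrimalDual

theorem newton_tracking_primal_linear_convergence_general
    {n p : ℕ}
    (W : Matrix (Fin n) (Fin n) ℝ)
    (hpsd : (IWmat p W).PosSemidef)
    (f : Fin n → Ep p → ℝ) (g : Fin n → Ep p → Ep p)
    (h : Fin n → Ep p → (Ep p →L[ℝ] Ep p))
    (μf Lf : ℝ) (hμpos : 0 < μf) (hμL : μf ≤ Lf)
    (hg : ∀ i z, HasGradientAt (f i) (g i z) z)
    (hh : ∀ i z, HasFDerivAt (g i) (h i z) z)
    (hlow : ∀ i z w, μf * ‖w‖ ^ 2 ≤ ⟪(h i z) w, w⟫_ℝ)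
    (hup : ∀ i z w, ⟪(h i z) w, w⟫_ℝ ≤ Lf * ‖w‖ ^ 2)
    (α ε : ℝ) (hα : 0 < α) (hε : 0 < ε)
    (x v : ℕ → Vnp n p)
    (hprimal : ∀ t, aggHess h (x t) (x t - x (t + 1)) + ε • (x t - x (t + 1)) =
      aggGrad g (x t) + Matrix.toEuclideanLin hpsd.sqrt (v t)
        + α • Matrix.toEuclideanLin (IWmat p W) (x t))
    (hdual : ∀ t, v (t + 1) = v t + α • Matrix.toEuclideanLin hpsd.sqrt (x (t + 1)))
    (xs vs : Vnp n p)
    (hK1 : aggGrad g xs + Matrix.toEuclideanLin hpsd.sqrt vs = 0)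
    (hK2 : Matrix.toEuclideanLin hpsd.sqrt xs = 0)
    (hcond : 4 * Lf ^ 2 / μf < ε - α * lamMax (IWmat p W))
    (hv0 : v 0 = 0)
    (hvscol : ∃ y : Vnp n p, vs = Matrix.toEuclideanLin hpsd.sqrt y)
    (β φ : ℝ) (hβ : 1 < β) (hφ : 1 < φ)
    (hδ'pos : 0 < deltaNT' μf Lf α ε (lamMax (IWmat p W)) (lamMinNZ (IWmat p W)) β φ) :
    ∀ t : ℕ,
      ‖x t - xs‖ ^ 2 ≤ (1 / (ε - α * lamMax (IWmat p W))) *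
        (1 / (1 + deltaNT' μf Lf α ε (lamMax (IWmat p W)) (lamMinNZ (IWmat p W)) β φ)) ^ t *
        (⟪x 0 - xs, ε • (x 0 - xs) - α • Matrix.toEuclideanLin (IWmat p W) (x 0 - xs)⟫_ℝ
          + (1 / α) * ‖v 0 - vs‖ ^ 2) := by
  set S := Matrix.toEuclideanLin hpsd.sqrt
  have hA : ∀ y, Matrix.toEuclideanLin (IWmat p W) y = S (S y) := fun y =>
    (hpsd.toEuclideanLin_sqrt_sqrt y).symm
  have hL : 0 ≤ Lf := hμpos.le.trans hμL
  have hhess : ∀ i z, ‖h i z‖ ≤ Lf := fun i => norm_le_of_hasFDerivAt_gradient (hg i) (hh i) hL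
    (fun z w => (by positivity : 0 ≤ μf * ‖w‖ ^ 2).trans (hlow i z w)) (hup i)
  have hv0' : v 0 - vs ∈ LinearMap.range S := by
    obtain ⟨y, rfl⟩ := hvscol
    rw [hv0, zero_sub, ← map_neg]
    exact LinearMap.mem_range_self _ _
  simp only [hA] at hprimal ⊢
  exact norm_sub_sq_le_of_newtonTracking
    (Matrix.isSymmetric_toEuclideanLin_iff.mpr hpsd.isHermitian_sqrt) hα hε hμpos
    hpsd.lamMax_nonneg hpsd.norm_toEuclideanLin_sqrt_sq_le
    hpsd.lamMinNZ_mul_norm_toEuclideanLin_sqrt_sq_le hβ hφ hcond hδ'pos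
    (aggGrad_inner_sub_sub_ge hh hlow) (norm_aggGrad_sub_le hh hL hhess) (norm_aggHess_le hL hhess)
    hprimal hdual hK1 hK2 hv0'

/-- Linear convergence of the primal iterates:
`‖x^t − x*‖² ≤ (1/(ε − α·λ_max(I−𝐖)))·(1/(1+δ'))^t·‖ζ⁰ − ζ*‖²_G`. -/
theorem newton_tracking_primal_linear_convergence
    {n p : ℕ} (hn : 0 < n) (hp : 0 < p)
    (W : Matrix (Fin n) (Fin n) ℝ)
    (hWnonneg : ∀ i j, 0 ≤ W i j) (hWsymm : W.IsSymm)
    (hWstoch : W *ᵥ (fun _ => (1 : ℝ)) = fun _ => 1)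
    (hWker : ∀ y : Fin n → ℝ, (1 - W) *ᵥ y = 0 ↔ ∃ c : ℝ, y = fun _ => c)
    (hpsd : (IWmat p W).PosSemidef)
    (f : Fin n → Ep p → ℝ) (g : Fin n → Ep p → Ep p)
    (h : Fin n → Ep p → (Ep p →L[ℝ] Ep p))
    (μf Lf : ℝ) (hμpos : 0 < μf) (hμL : μf ≤ Lf)
    (hC2 : ∀ i, ContDiff ℝ 2 (f i))
    (hg : ∀ i z, HasGradientAt (f i) (g i z) z)
    (hh : ∀ i z, HasFDerivAt (g i) (h i z) z)
    (hlow : ∀ i z w, μf * ‖w‖ ^ 2 ≤ ⟪(h i z) w, w⟫_ℝ)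
    (hup : ∀ i z w, ⟪(h i z) w, w⟫_ℝ ≤ Lf * ‖w‖ ^ 2)
    (α ε : ℝ) (hα : 0 < α) (hε : 0 < ε)
    (x v : ℕ → Vnp n p)
    (hprimal : ∀ t, aggHess h (x t) (x t - x (t + 1)) + ε • (x t - x (t + 1)) =
      aggGrad g (x t) + Matrix.toEuclideanLin hpsd.sqrt (v t)
        + α • Matrix.toEuclideanLin (IWmat p W) (x t))
    (hdual : ∀ t, v (t + 1) = v t + α • Matrix.toEuclideanLin hpsd.sqrt (x (t + 1)))
    (xs vs : Vnp n p)
    (hK1 : aggGrad g xs + Matrix.toEuclideanLin hpsd.sqrt vs = 0)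
    (hK2 : Matrix.toEuclideanLin hpsd.sqrt xs = 0)
    (hcond : 4 * Lf ^ 2 / μf < ε - α * lamMax (IWmat p W))
    (hv0 : v 0 = 0)
    (hvscol : ∃ y : Vnp n p, vs = Matrix.toEuclideanLin hpsd.sqrt y)
    (β φ : ℝ) (hβ : 1 < β) (hφ : 1 < φ)
    (hδ'pos : 0 < deltaNT' μf Lf α ε (lamMax (IWmat p W)) (lamMinNZ (IWmat p W)) β φ) :
    ∀ t : ℕ,
      ‖x t - xs‖ ^ 2 ≤ (1 / (ε - α * lamMax (IWmat p W))) *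
        (1 / (1 + deltaNT' μf Lf α ε (lamMax (IWmat p W)) (lamMinNZ (IWmat p W)) β φ)) ^ t *
        (⟪x 0 - xs, ε • (x 0 - xs) - α • Matrix.toEuclideanLin (IWmat p W) (x 0 - xs)⟫_ℝ
          + (1 / α) * ‖v 0 - vs‖ ^ 2) :=
  newton_tracking_primal_linear_convergence_general W hpsd f g h μf Lf hμpos hμL hg hh hlow hup α ε
    hα hε x v hprimal hdual xs vs hK1 hK2 hcond hv0 hvscol β φ hβ hφ hδ'pos
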